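/- Consider the perturbed augmented closed-loop system ζ_{k+1} = 𝒜ζ_k + ℬ₁φ_k + ℬ₂q_k + ℬ₃w_k + ℬ₄d_k, with p_k = 𝒞_p ζ_k ∈ ℝ^{n_Φ}, q_k = Φ̃(p_k) where Φ̃ satisfies Φ̃(p)ᵢ² ≤ pᵢ² for all p and i; v_k = 𝒞_v ζ_k + 𝒟_{v1}φ_k + 𝒟_{v2}q_k + 𝒟_{v4}d_k ∈ ℝ^{n_w}, w_k = Δ·v_k for a scalar Δ with |Δ| ≤ 1; r_k = (p_k, q_k) and s_k = (v_k, w_k), written as r_k = 𝒞₁ζ_k + 𝒟₁₂q_k and s_k = 𝒞₂ζ_k + 𝒟₂₁φ_k + 𝒟₂₂q_k + 𝒟₂₃w_k + 𝒟₂₄d_k with 𝒞₁ = [𝒞_p; 0], 𝒟₁₂ = [0; I], 𝒞₂ = [𝒞_v; 0], 𝒟₂₁ = [𝒟_{v1}; 0], 𝒟₂₂ = [𝒟_{v2}; 0], 𝒟₂₃ = [0; I], 𝒟₂₄ = [𝒟_{v4}; 0]. Let ρ ∈ (0,1], let P be symmetric positive definite, let Λ be diagonal with nonnegative entries, let M₁,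 M₂ be symmetric with M₁ − λ₁·blkdiag(Λ, −Λ) and M₂ − λ₂·blkdiag(I, −I) positive definite for some λ₁, λ₂ > 0, and let μ_d > 0, μ_φ > 0. Suppose ΓᵀΠΓ is negative semidefinite, where Γ has block rows [I,0,0,0,0], [𝒜,ℬ₁,ℬ₂,ℬ₃,ℬ₄], [𝒞₁,0,𝒟₁₂,0,0], [𝒞₂,𝒟₂₁,𝒟₂₂,𝒟₂₃,𝒟₂₄], [0,0,0,0,I_{n_d}], [0,I_{n_φ},0,0,0], and Π = blkdiag(−ρ²P, P, M₁, M₂, −μ_d·I_{n_d}, −μ_φ·I_{n_φ}). Define σ₀ = ζ₀ᵀPζ₀ and σ_{k+1} = ρ²σ_k + μ_d‖d_k‖² + μ_φ‖φ_k‖². Then every trajectory satisfies ζ_kᵀPζ_k ≤ σ_k for all k ≥ 0. -/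

import Mathlib

/-!
Evaluate the LMI `ΓᵀΠΓ ⪯ 0` at the stacked vector `(ζ_k, φ_k, q_k, w_k, d_k)`: `Γ` maps it to
`(ζ_k, ζ_{k+1}, r_k, s_k, d_k, φ_k)`, so the quadratic form of `Π` there is `≤ 0`. The sector bound
on `Φ̃` and `|Δ| ≤ 1` make `r_kᵀ blkdiag(Λ, -Λ) r_k` and `s_kᵀ blkdiag(I, -I) s_k` nonnegative, and
by the S-procedure (`M_i - λ_i N_i ⪰ 0`, `λ_i ≥ 0`) so are `r_kᵀ M₁ r_k` and `s_kᵀ M₂ s_k`. Dropping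
them leaves `V(ζ_{k+1}) ≤ ρ² V(ζ_k) + μ_d‖d_k‖² + μ_φ‖φ_k‖²` for `V(ζ) = ζᵀPζ`, and comparison with
the recursion defining `σ` gives the bound.
-/

open Matrix

section QuadraticForms

variable {m n R : Type*} [Fintype m] [Fintype n]

theorem sumElim_dotProduct_fromBlocks_mulVec_sumElim [NonUnitalNonAssocSemiring R]
    (A : Matrix m m R) (D : Matrix n n R) (x : m → R) (y : n → R) :
    Sum.elim x y ⬝ᵥ fromBlocks A 0 0 D *ᵥ Sum.elim x y = x ⬝ᵥ A *ᵥ x + y ⬝ᵥ D *ᵥ y := by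
  simp only [fromBlocks_mulVec, zero_mulVec, add_zero, zero_add, sumElim_dotProduct_sumElim,
    Sum.elim_comp_inl, Sum.elim_comp_inr]

theorem dotProduct_transpose_mul_mul_mulVec [CommSemiring R]
    (Γ : Matrix m n R) (M : Matrix m m R) (x : n → R) :
    x ⬝ᵥ (Γᵀ * M * Γ) *ᵥ x = Γ *ᵥ x ⬝ᵥ M *ᵥ (Γ *ᵥ x) := by
  rw [← mulVec_mulVec, ← mulVec_mulVec, dotProduct_mulVec, vecMul_transpose]

end QuadraticForms

section Real

variable {m n : Type*} [Fintype m] [Fintype n]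

theorem dotProduct_mulVec_nonpos_of_posSemidef_neg {M : Matrix m m ℝ} (Γ : Matrix m n ℝ)
    (h : (-(Γᵀ * M * Γ)).PosSemidef) (x : n → ℝ) : Γ *ᵥ x ⬝ᵥ M *ᵥ (Γ *ᵥ x) ≤ 0 := by
  have := h.dotProduct_mulVec_nonneg x
  rw [star_trivial, neg_mulVec, dotProduct_neg, dotProduct_transpose_mul_mul_mulVec] at this
  linarith

theorem dotProduct_mulVec_nonneg_of_posSemidef_sub_smul {M N : Matrix n n ℝ} {c : ℝ}
    (h : (M - c • N).PosSemidef) (hc : 0 ≤ c) {x : n → ℝ} (hx : 0 ≤ x ⬝ᵥ N *ᵥ x) :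
    0 ≤ x ⬝ᵥ M *ᵥ x := by
  have := h.dotProduct_mulVec_nonneg x
  rw [star_trivial, sub_mulVec, dotProduct_sub, smul_mulVec, dotProduct_smul, smul_eq_mul]
    at this
  nlinarith [mul_nonneg hc hx]

theorem sector_dotProduct_mulVec_nonneg [DecidableEq n] {Λ p q : n → ℝ} (hΛ : ∀ i, 0 ≤ Λ i)
    (hpq : ∀ i, q i ^ 2 ≤ p i ^ 2) :
    0 ≤ Sum.elim p q ⬝ᵥ fromBlocks (diagonal Λ) 0 0 (-diagonal Λ) *ᵥ Sum.elim p q := by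
  rw [sumElim_dotProduct_fromBlocks_mulVec_sumElim, neg_mulVec, dotProduct_neg,
    ← sub_eq_add_neg, sub_nonneg]
  refine Finset.sum_le_sum fun i _ => ?_
  simp only [mulVec_diagonal]
  nlinarith [mul_le_mul_of_nonneg_left (hpq i) (hΛ i)]

theorem sector_dotProduct_mulVec_nonneg_of_abs_le_one [DecidableEq n] {Δ : ℝ} (hΔ : |Δ| ≤ 1)
    (v : n → ℝ) :
    0 ≤ Sum.elim v (Δ • v) ⬝ᵥ fromBlocks (1 : Matrix n n ℝ) 0 0 (-1) *ᵥ Sum.elim v (Δ • v) := by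
  rw [← diagonal_one]
  refine sector_dotProduct_mulVec_nonneg (fun _ => zero_le_one) fun i => ?_
  rw [Pi.smul_apply, smul_eq_mul, mul_pow]
  have : Δ ^ 2 ≤ 1 := by rw [← sq_abs]; exact pow_le_one₀ (abs_nonneg Δ) hΔ
  nlinarith [sq_nonneg (v i)]

end Real

theorem le_of_succ_le_mul_add {V σ e : ℕ → ℝ} {a : ℝ} (ha : 0 ≤ a) (h0 : V 0 ≤ σ 0)
    (hV : ∀ k, V (k + 1) ≤ a * V k + e k) (hσ : ∀ k, σ (k + 1) = a * σ k + e k) :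
    ∀ k, V k ≤ σ k
  | 0 => h0
  | k + 1 => by
    rw [hσ]
    linarith [hV k, mul_le_mul_of_nonneg_left (le_of_succ_le_mul_add ha h0 hV hσ k) ha]

theorem reachable_set_bound_general
    (nζ nφ nΦ nw nd : ℕ)
    (ρ : ℝ)
    (P : Matrix (Fin nζ) (Fin nζ) ℝ)
    (Φt : (Fin nΦ → ℝ) → (Fin nΦ → ℝ))
    (hΦt : ∀ p : Fin nΦ → ℝ, ∀ i, (Φt p i) ^ 2 ≤ (p i) ^ 2)
    (Δ : ℝ) (hΔ : |Δ| ≤ 1)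
    (A : Matrix (Fin nζ) (Fin nζ) ℝ)
    (B₁ : Matrix (Fin nζ) (Fin nφ) ℝ)
    (B₂ : Matrix (Fin nζ) (Fin nΦ) ℝ)
    (B₃ : Matrix (Fin nζ) (Fin nw) ℝ)
    (B₄ : Matrix (Fin nζ) (Fin nd) ℝ)
    (Cp : Matrix (Fin nΦ) (Fin nζ) ℝ)
    (Cv : Matrix (Fin nw) (Fin nζ) ℝ)
    (Dv1 : Matrix (Fin nw) (Fin nφ) ℝ)
    (Dv2 : Matrix (Fin nw) (Fin nΦ) ℝ)
    (Dv4 : Matrix (Fin nw) (Fin nd) ℝ)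
    (C₁ : Matrix (Fin nΦ ⊕ Fin nΦ) (Fin nζ) ℝ) (hC₁ : C₁ = fromRows Cp 0)
    (D₁₂ : Matrix (Fin nΦ ⊕ Fin nΦ) (Fin nΦ) ℝ) (hD₁₂ : D₁₂ = fromRows 0 1)
    (C₂ : Matrix (Fin nw ⊕ Fin nw) (Fin nζ) ℝ) (hC₂ : C₂ = fromRows Cv 0)
    (D₂₁ : Matrix (Fin nw ⊕ Fin nw) (Fin nφ) ℝ) (hD₂₁ : D₂₁ = fromRows Dv1 0)
    (D₂₂ : Matrix (Fin nw ⊕ Fin nw) (Fin nΦ) ℝ) (hD₂₂ : D₂₂ = fromRows Dv2 0)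
    (D₂₃ : Matrix (Fin nw ⊕ Fin nw) (Fin nw) ℝ) (hD₂₃ : D₂₃ = fromRows 0 1)
    (D₂₄ : Matrix (Fin nw ⊕ Fin nw) (Fin nd) ℝ) (hD₂₄ : D₂₄ = fromRows Dv4 0)
    (Λ : Fin nΦ → ℝ) (hΛ : ∀ i, 0 ≤ Λ i)
    (M₁ : Matrix (Fin nΦ ⊕ Fin nΦ) (Fin nΦ ⊕ Fin nΦ) ℝ)
    (M₂ : Matrix (Fin nw ⊕ Fin nw) (Fin nw ⊕ Fin nw) ℝ)
    (lam₁ lam₂ : ℝ) (hlam₁ : 0 < lam₁) (hlam₂ : 0 < lam₂)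
    (hM₁pd : (M₁ - lam₁ •
        fromBlocks (diagonal Λ) 0 0 (-(diagonal Λ))).PosDef)
    (hM₂pd : (M₂ - lam₂ •
        fromBlocks (1 : Matrix (Fin nw) (Fin nw) ℝ) 0 0
          (-(1 : Matrix (Fin nw) (Fin nw) ℝ))).PosDef)
    (μd μφ : ℝ)
    (Γ : Matrix
        (((Fin nζ ⊕ Fin nζ) ⊕ ((Fin nΦ ⊕ Fin nΦ) ⊕ (Fin nw ⊕ Fin nw)))
          ⊕ (Fin nd ⊕ Fin nφ))
        (Fin nζ ⊕ (Fin nφ ⊕ (Fin nΦ ⊕ (Fin nw ⊕ Fin nd)))) ℝ)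
    (hΓ : Γ = fromRows
        (fromRows
          (fromRows
            (fromCols (1 : Matrix (Fin nζ) (Fin nζ) ℝ)
              (fromCols 0 (fromCols 0 (fromCols 0 0))))
            (fromCols A
              (fromCols B₁ (fromCols B₂ (fromCols B₃ B₄)))))
          (fromRows
            (fromCols C₁
              (fromCols 0 (fromCols D₁₂ (fromCols 0 0))))
            (fromCols C₂
              (fromCols D₂₁ (fromCols D₂₂ (fromCols D₂₃ D₂₄))))))
        (fromRows
          (fromCols 0
            (fromCols 0 (fromCols 0
              (fromCols 0 (1 : Matrix (Fin nd) (Fin nd) ℝ)))))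
          (fromCols 0
            (fromCols (1 : Matrix (Fin nφ) (Fin nφ) ℝ)
              (fromCols 0 (fromCols 0 0))))))
    (Pm : Matrix
        (((Fin nζ ⊕ Fin nζ) ⊕ ((Fin nΦ ⊕ Fin nΦ) ⊕ (Fin nw ⊕ Fin nw)))
          ⊕ (Fin nd ⊕ Fin nφ))
        (((Fin nζ ⊕ Fin nζ) ⊕ ((Fin nΦ ⊕ Fin nΦ) ⊕ (Fin nw ⊕ Fin nw)))
          ⊕ (Fin nd ⊕ Fin nφ)) ℝ)
    (hPm : Pm = fromBlocks
        (fromBlocks (fromBlocks (-(ρ ^ 2) • P) 0 0 P) 0 0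
          (fromBlocks M₁ 0 0 M₂))
        0 0
        (fromBlocks (-μd • (1 : Matrix (Fin nd) (Fin nd) ℝ)) 0 0
          (-μφ • (1 : Matrix (Fin nφ) (Fin nφ) ℝ))))
    (hLMI : (-(Γᵀ * Pm * Γ)).PosSemidef)
    (ζ : ℕ → Fin nζ → ℝ) (φv : ℕ → Fin nφ → ℝ) (d : ℕ → Fin nd → ℝ)
    (p q : ℕ → Fin nΦ → ℝ) (v w : ℕ → Fin nw → ℝ)
    (hp : ∀ k, p k = Cp.mulVec (ζ k))
    (hq : ∀ k, q k = Φt (p k))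
    (hv : ∀ k, v k = Cv.mulVec (ζ k) + Dv1.mulVec (φv k)
        + Dv2.mulVec (q k) + Dv4.mulVec (d k))
    (hw : ∀ k, w k = Δ • v k)
    (hdyn : ∀ k, ζ (k + 1) = A.mulVec (ζ k) + B₁.mulVec (φv k)
        + B₂.mulVec (q k) + B₃.mulVec (w k) + B₄.mulVec (d k))
    (σ : ℕ → ℝ)
    (hσ0 : σ 0 = ζ 0 ⬝ᵥ P.mulVec (ζ 0))
    (hσ : ∀ k, σ (k + 1) = ρ ^ 2 * σ k + μd * (d k ⬝ᵥ d k)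
        + μφ * (φv k ⬝ᵥ φv k)) :
    ∀ k : ℕ, ζ k ⬝ᵥ P.mulVec (ζ k) ≤ σ k := by
  have hstep : ∀ k, ζ (k + 1) ⬝ᵥ P *ᵥ ζ (k + 1) ≤
      ρ ^ 2 * (ζ k ⬝ᵥ P *ᵥ ζ k) + (μd * (d k ⬝ᵥ d k) + μφ * (φv k ⬝ᵥ φv k)) := by
    intro k
    have hΓx : Γ *ᵥ Sum.elim (ζ k) (Sum.elim (φv k) (Sum.elim (q k) (Sum.elim (w k) (d k)))) =
        Sum.elim (Sum.elim (Sum.elim (ζ k) (ζ (k + 1)))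
          (Sum.elim (Sum.elim (p k) (q k)) (Sum.elim (v k) (w k)))) (Sum.elim (d k) (φv k)) := by
      subst hΓ hC₁ hD₁₂ hC₂ hD₂₁ hD₂₂ hD₂₃ hD₂₄
      funext i
      rcases i with ((i | i) | ((i | i) | (i | i))) | (i | i) <;>
        simp [hdyn k, hp k, hv k, add_assoc, fromBlocks_mulVec]
    have hsupply := dotProduct_mulVec_nonpos_of_posSemidef_neg Γ hLMI
      (Sum.elim (ζ k) (Sum.elim (φv k) (Sum.elim (q k) (Sum.elim (w k) (d k)))))
    have hr := dotProduct_mulVec_nonneg_of_posSemidef_sub_smul hM₁pd.posSemidef hlam₁.le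
      (sector_dotProduct_mulVec_nonneg hΛ fun i => hq k ▸ hΦt (p k) i)
    have hs := dotProduct_mulVec_nonneg_of_posSemidef_sub_smul hM₂pd.posSemidef hlam₂.le
      (hw k ▸ sector_dotProduct_mulVec_nonneg_of_abs_le_one hΔ (v k))
    rw [hΓx, hPm] at hsupply
    simp only [sumElim_dotProduct_fromBlocks_mulVec_sumElim, smul_mulVec, dotProduct_smul,
      one_mulVec, smul_eq_mul] at hsupply
    linarith
  exact le_of_succ_le_mul_add (sq_nonneg ρ) hσ0.ge hstep fun k => by rw [hσ k, add_assoc]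

/-- Reachable-set bound (Proposition 1): for the perturbed uncertain augmented
closed loop with sector-bounded nonlinearity `Φ̃` (sector `[-1,1]`), scalar
uncertainty `|Δ| ≤ 1`, and LMI `ΓᵀΠΓ ⪯ 0` with
`Π = blkdiag(−ρ²P, P, M₁, M₂, −μ_d I, −μ_φ I)`, every trajectory satisfies
`ζ_kᵀPζ_k ≤ σ_k`, where `σ₀ = ζ₀ᵀPζ₀` and
`σ_{k+1} = ρ²σ_k + μ_d‖d_k‖² + μ_φ‖φ_k‖²`. -/
theorem reachable_set_bound
    (nζ nφ nΦ nw nd : ℕ)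
    (ρ : ℝ) (hρ0 : 0 < ρ) (hρ1 : ρ ≤ 1)
    (P : Matrix (Fin nζ) (Fin nζ) ℝ) (hP : P.PosDef)
    (Φt : (Fin nΦ → ℝ) → (Fin nΦ → ℝ))
    (hΦt : ∀ p : Fin nΦ → ℝ, ∀ i, (Φt p i) ^ 2 ≤ (p i) ^ 2)
    (Δ : ℝ) (hΔ : |Δ| ≤ 1)
    (A : Matrix (Fin nζ) (Fin nζ) ℝ)
    (B₁ : Matrix (Fin nζ) (Fin nφ) ℝ)
    (B₂ : Matrix (Fin nζ) (Fin nΦ) ℝ)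
    (B₃ : Matrix (Fin nζ) (Fin nw) ℝ)
    (B₄ : Matrix (Fin nζ) (Fin nd) ℝ)
    (Cp : Matrix (Fin nΦ) (Fin nζ) ℝ)
    (Cv : Matrix (Fin nw) (Fin nζ) ℝ)
    (Dv1 : Matrix (Fin nw) (Fin nφ) ℝ)
    (Dv2 : Matrix (Fin nw) (Fin nΦ) ℝ)
    (Dv4 : Matrix (Fin nw) (Fin nd) ℝ)
    (C₁ : Matrix (Fin nΦ ⊕ Fin nΦ) (Fin nζ) ℝ) (hC₁ : C₁ = fromRows Cp 0)
    (D₁₂ : Matrix (Fin nΦ ⊕ Fin nΦ) (Fin nΦ) ℝ) (hD₁₂ : D₁₂ = fromRows 0 1)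
    (C₂ : Matrix (Fin nw ⊕ Fin nw) (Fin nζ) ℝ) (hC₂ : C₂ = fromRows Cv 0)
    (D₂₁ : Matrix (Fin nw ⊕ Fin nw) (Fin nφ) ℝ) (hD₂₁ : D₂₁ = fromRows Dv1 0)
    (D₂₂ : Matrix (Fin nw ⊕ Fin nw) (Fin nΦ) ℝ) (hD₂₂ : D₂₂ = fromRows Dv2 0)
    (D₂₃ : Matrix (Fin nw ⊕ Fin nw) (Fin nw) ℝ) (hD₂₃ : D₂₃ = fromRows 0 1)
    (D₂₄ : Matrix (Fin nw ⊕ Fin nw) (Fin nd) ℝ) (hD₂₄ : D₂₄ = fromRows Dv4 0)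
    (Λ : Fin nΦ → ℝ) (hΛ : ∀ i, 0 ≤ Λ i)
    (M₁ : Matrix (Fin nΦ ⊕ Fin nΦ) (Fin nΦ ⊕ Fin nΦ) ℝ) (hM₁ : M₁.IsSymm)
    (M₂ : Matrix (Fin nw ⊕ Fin nw) (Fin nw ⊕ Fin nw) ℝ) (hM₂ : M₂.IsSymm)
    (lam₁ lam₂ : ℝ) (hlam₁ : 0 < lam₁) (hlam₂ : 0 < lam₂)
    (hM₁pd : (M₁ - lam₁ •
        fromBlocks (diagonal Λ) 0 0 (-(diagonal Λ))).PosDef)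
    (hM₂pd : (M₂ - lam₂ •
        fromBlocks (1 : Matrix (Fin nw) (Fin nw) ℝ) 0 0
          (-(1 : Matrix (Fin nw) (Fin nw) ℝ))).PosDef)
    (μd μφ : ℝ) (hμd : 0 < μd) (hμφ : 0 < μφ)
    (Γ : Matrix
        (((Fin nζ ⊕ Fin nζ) ⊕ ((Fin nΦ ⊕ Fin nΦ) ⊕ (Fin nw ⊕ Fin nw)))
          ⊕ (Fin nd ⊕ Fin nφ))
        (Fin nζ ⊕ (Fin nφ ⊕ (Fin nΦ ⊕ (Fin nw ⊕ Fin nd)))) ℝ)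
    (hΓ : Γ = fromRows
        (fromRows
          (fromRows
            (fromCols (1 : Matrix (Fin nζ) (Fin nζ) ℝ)
              (fromCols 0 (fromCols 0 (fromCols 0 0))))
            (fromCols A
              (fromCols B₁ (fromCols B₂ (fromCols B₃ B₄)))))
          (fromRows
            (fromCols C₁
              (fromCols 0 (fromCols D₁₂ (fromCols 0 0))))
            (fromCols C₂
              (fromCols D₂₁ (fromCols D₂₂ (fromCols D₂₃ D₂₄))))))
        (fromRows
          (fromCols 0
            (fromCols 0 (fromCols 0
              (fromCols 0 (1 : Matrix (Fin nd) (Fin nd) ℝ)))))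
          (fromCols 0
            (fromCols (1 : Matrix (Fin nφ) (Fin nφ) ℝ)
              (fromCols 0 (fromCols 0 0))))))
    (Pm : Matrix
        (((Fin nζ ⊕ Fin nζ) ⊕ ((Fin nΦ ⊕ Fin nΦ) ⊕ (Fin nw ⊕ Fin nw)))
          ⊕ (Fin nd ⊕ Fin nφ))
        (((Fin nζ ⊕ Fin nζ) ⊕ ((Fin nΦ ⊕ Fin nΦ) ⊕ (Fin nw ⊕ Fin nw)))
          ⊕ (Fin nd ⊕ Fin nφ)) ℝ)
    (hPm : Pm = fromBlocks
        (fromBlocks (fromBlocks (-(ρ ^ 2) • P) 0 0 P) 0 0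
          (fromBlocks M₁ 0 0 M₂))
        0 0
        (fromBlocks (-μd • (1 : Matrix (Fin nd) (Fin nd) ℝ)) 0 0
          (-μφ • (1 : Matrix (Fin nφ) (Fin nφ) ℝ))))
    (hLMI : (-(Γᵀ * Pm * Γ)).PosSemidef)
    (ζ : ℕ → Fin nζ → ℝ) (φv : ℕ → Fin nφ → ℝ) (d : ℕ → Fin nd → ℝ)
    (p q : ℕ → Fin nΦ → ℝ) (v w : ℕ → Fin nw → ℝ)
    (hp : ∀ k, p k = Cp.mulVec (ζ k))
    (hq : ∀ k, q k = Φt (p k))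
    (hv : ∀ k, v k = Cv.mulVec (ζ k) + Dv1.mulVec (φv k)
        + Dv2.mulVec (q k) + Dv4.mulVec (d k))
    (hw : ∀ k, w k = Δ • v k)
    (hdyn : ∀ k, ζ (k + 1) = A.mulVec (ζ k) + B₁.mulVec (φv k)
        + B₂.mulVec (q k) + B₃.mulVec (w k) + B₄.mulVec (d k))
    (σ : ℕ → ℝ)
    (hσ0 : σ 0 = ζ 0 ⬝ᵥ P.mulVec (ζ 0))
    (hσ : ∀ k, σ (k + 1) = ρ ^ 2 * σ k + μd * (d k ⬝ᵥ d k)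
        + μφ * (φv k ⬝ᵥ φv k)) :
    ∀ k : ℕ, ζ k ⬝ᵥ P.mulVec (ζ k) ≤ σ k :=
  reachable_set_bound_general nζ nφ nΦ nw nd ρ P Φt hΦt Δ hΔ A B₁ B₂ B₃ B₄ Cp Cv Dv1 Dv2 Dv4 C₁ hC₁
    D₁₂ hD₁₂ C₂ hC₂ D₂₁ hD₂₁ D₂₂ hD₂₂ D₂₃ hD₂₃ D₂₄ hD₂₄ Λ hΛ M₁ M₂ lam₁ lam₂ hlam₁ hlam₂ hM₁pd hM₂pd
    μd μφ Γ hΓ Pm hPm hLMI ζ φv d p q v w hp hq hv hw hdyn σ hσ0 hσ
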